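/- Second Generalized Coinduction Theorem (one direction): the principle of mathematical induction on ℕ follows from the generalized coinduction proof principle. Precisely, assuming that for every predicate p on D and every stream s, the existence of a p-hereditary predicate H with H(s) implies ∀ n, p(s(n)), one can derive: for any predicate q : ℕ → Prop, if q(0) holds and q(n) implies q(n+1) for all n, then q(n) holds for all n. -/
import Mathlib

def tail (s : ℕ → ℕ) : ℕ → ℕ := fun k => s (k + 1)

def Hereditary (p : ℕ → Prop) (H : (ℕ → ℕ) → Prop) : Prop :=
  ∀ s : ℕ → ℕ, H s → p (s 0) ∧ H (tail s)

/-- Mathematical induction follows from the generalized coinduction proof principle. -/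
theorem induction_from_generalized_coinduction
    (coind : ∀ (p : ℕ → Prop) (s : ℕ → ℕ),
      (∃ H : (ℕ → ℕ) → Prop, Hereditary p H ∧ H s) → ∀ n : ℕ, p (s n))
    (q : ℕ → Prop) (h0 : q 0) (hstep : ∀ n : ℕ, q n → q (n + 1)) :
    ∀ n : ℕ, q n := by
  have := coind q (fun n => n)
    ⟨fun s => q (s 0) ∧ ∀ k, s (k + 1) = s k + 1, by
      intro s hs
      refine ⟨hs.1, ⟨?_, fun k => hs.2 (k + 1)⟩⟩
      show q (s 1)
      rw [show (1 : ℕ) = 0 + 1 from rfl, hs.2 0]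
      exact hstep _ hs.1, h0, fun k => rfl⟩
  exact this
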